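/- arXiv:2101.00626 — 2 statements merged into one kernel-verified Lean document; each statement's English description precedes it below -/
import Mathlib

section
/- A tree T is locally finite (every vertex has finite degree) if and only if for every non-degenerate labeling l : V(T) → [0,∞) the ultrametric space (V(T), d_l) is discrete. -/
open SimpleGraph Filter

/-- `d` is the distance pinned by labeling `l` on graph `G`: zero on the diagonal and
otherwise the maximum of the labels over (any, hence the unique) path joining the points. -/
def PinnedDist {V : Type} (G : SimpleGraph V) (l : V → ℝ) (d : V → V → ℝ) : Prop :=
  (∀ u : V, d u u = 0) ∧
  ∀ u v : V, u ≠ v → ∀ p : G.Walk u v, p.IsPath →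
    d u v = (p.support.map l).foldr max 0

/-- A nonnegative labeling with `max (l u) (l v) > 0` on every edge. -/
def NondegLabeling {V : Type} (G : SimpleGraph V) (l : V → ℝ) : Prop :=
  (∀ v, 0 ≤ l v) ∧ ∀ u v : V, G.Adj u v → 0 < max (l u) (l v)

/-- Cauchy sequence with respect to a distance function. -/
def CauchyWith {V : Type} (d : V → V → ℝ) (x : ℕ → V) : Prop :=
  ∀ ε : ℝ, 0 < ε → ∃ N : ℕ, ∀ m ≥ N, ∀ n ≥ N, d (x m) (x n) < ε

/-- Convergence of a sequence to a point with respect to a distance function. -/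
def TendstoWith {V : Type} (d : V → V → ℝ) (x : ℕ → V) (a : V) : Prop :=
  ∀ ε : ℝ, 0 < ε → ∃ N : ℕ, ∀ n ≥ N, d (x n) a < ε

/-- Completeness: every Cauchy sequence converges. -/
def CompleteWith {V : Type} (d : V → V → ℝ) : Prop :=
  ∀ x : ℕ → V, CauchyWith d x → ∃ a : V, TendstoWith d x a

/-- Discreteness: every point is isolated. -/
def DiscreteWith {V : Type} (d : V → V → ℝ) : Prop :=
  ∀ p : V, ∃ ε : ℝ, 0 < ε ∧ ∀ x : V, x ≠ p → ε ≤ d p x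

/-- Total boundedness: finitely many open balls of any positive radius cover the space. -/
def TotallyBoundedWith {V : Type} (d : V → V → ℝ) : Prop :=
  ∀ r : ℝ, 0 < r → ∃ S : Finset V, ∀ v : V, ∃ c ∈ S, d c v < r

/-- Sequential compactness: every sequence has a convergent subsequence. -/
def SeqCompactWith {V : Type} (d : V → V → ℝ) : Prop :=
  ∀ x : ℕ → V, ∃ a : V, ∃ φ : ℕ → ℕ, StrictMono φ ∧ TendstoWith d (x ∘ φ) a

/-- `x` enumerates a ray contained in `G`: distinct vertices, consecutive ones adjacent. -/
def IsRayIn {V : Type} (G : SimpleGraph V) (x : ℕ → V) : Prop :=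
  Function.Injective x ∧ ∀ n : ℕ, G.Adj (x n) (x (n + 1))

/-- The one-sided infinite path (ray) on `ℕ`. -/
def rayGraph : SimpleGraph ℕ := SimpleGraph.fromRel fun m n => n = m + 1


private lemma le_foldr_max' {a : ℝ} : ∀ {L : List ℝ}, a ∈ L → a ≤ L.foldr max 0
  | b :: t, h => by
    rcases List.mem_cons.1 h with rfl | h
    · exact le_max_left _ _
    · exact le_trans (le_foldr_max' h) (le_max_right _ _)

theorem stmt13 {V : Type} {G : SimpleGraph V} (hT : G.IsTree) :
    (∀ v : V, (G.neighborSet v).Finite) ↔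
      ∀ l : V → ℝ, NondegLabeling G l →
        ∀ d : V → V → ℝ, PinnedDist G l d → DiscreteWith d := by
  classical
  constructor
  · -- locally finite → discrete
    intro hfin l hl d hd p
    rcases eq_or_lt_of_le (hl.1 p) with hp0 | hp
    · -- l p = 0, so every neighbor has positive label
      set N := (hfin p).toFinset with hN
      rcases N.eq_empty_or_nonempty with hNe | hNe
      · refine ⟨1, one_pos, fun x hx => ?_⟩
        exfalso
        obtain ⟨w⟩ := hT.isConnected p x
        cases w.toPath.1 with
        | nil => exact hx rfl
        | cons h q =>
          have : _ ∈ N := (hfin p).mem_toFinset.2 h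
          simp [hNe] at this
      · refine ⟨N.inf' hNe l, ?_, ?_⟩
        · refine (Finset.lt_inf'_iff hNe).2 fun b hb => ?_
          have hb' : G.Adj p b := ((hfin p).mem_toFinset.1 hb)
          have := hl.2 p b hb'
          rw [← hp0, max_comm] at this
          simpa using this
        · intro x hx
          obtain ⟨w0⟩ := hT.isConnected p x
          obtain ⟨w, hw⟩ := w0.toPath
          cases w with
          | nil => exact absurd rfl hx
          | @cons _ b _ h q =>
            rw [hd.2 p x hx.symm _ hw]
            have hb : b ∈ N := (hfin p).mem_toFinset.2 h
            have hbmem : b ∈ (SimpleGraph.Walk.cons h q).support := by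
              rw [SimpleGraph.Walk.support_cons]
              exact List.mem_cons_of_mem _ q.start_mem_support
            have hmem : l b ∈ ((SimpleGraph.Walk.cons h q).support.map l) :=
              List.mem_map_of_mem (f := l) hbmem
            exact le_trans (Finset.inf'_le l hb) (le_foldr_max' hmem)
    · -- l p > 0
      refine ⟨l p, hp, fun x hx => ?_⟩
      obtain ⟨w0⟩ := hT.isConnected p x
      obtain ⟨w, hw⟩ := w0.toPath
      rw [hd.2 p x hx.symm _ hw]
      exact le_foldr_max' (List.mem_map_of_mem (f := l) w.start_mem_support)
  · -- discrete for all → locally finite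
    intro H v
    by_contra hinf
    have hinf' : (G.neighborSet v).Infinite := hinf
    set f := hinf'.natEmbedding with hf
    -- labeling
    set l : V → ℝ := fun w =>
      if hw : ∃ n, (f n : V) = w then 1 / (Nat.find hw + 1) else if w = v then 0 else 1
      with hldef
    have hvne : ∀ n, (f n : V) ≠ v := by
      intro n h
      have : (f n : V) ∈ G.neighborSet v := (f n).2
      rw [h] at this
      exact G.irrefl this
    have hlv : l v = 0 := by
      rw [hldef]
      have : ¬ ∃ n, (f n : V) = v := fun ⟨n, hn⟩ => hvne n hn
      simp [this]
    have hlfn : ∀ n, l (f n : V) = 1 / (n + 1) := by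
      intro n
      have he : ∃ m, (f m : V) = (f n : V) := ⟨n, rfl⟩
      have h1 : (f (Nat.find he) : V) = (f n : V) := Nat.find_spec he
      have h2 : Nat.find he = n := f.injective (Subtype.ext h1)
      simp only [hldef, dif_pos he, h2]
    have hlpos : ∀ w, w ≠ v → 0 < l w := by
      intro w hw
      simp only [hldef]
      by_cases he : ∃ n, (f n : V) = w
      · rw [dif_pos he]; positivity
      · rw [dif_neg he, if_neg hw]; norm_num
    have hnd : NondegLabeling G l := by
      constructor
      · intro w
        by_cases hw : w = v
        · rw [hw, hlv]
        · exact le_of_lt (hlpos w hw)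
      · intro a b hab
        by_cases ha : a = v
        · have hb : b ≠ v := fun h => G.irrefl (h ▸ ha ▸ hab)
          exact lt_max_of_lt_right (hlpos b hb)
        · exact lt_max_of_lt_left (hlpos a ha)
    -- distance
    set d : V → V → ℝ := fun u w =>
      if h : u = w then 0
      else (((hT.existsUnique_path u w).exists.choose).support.map l).foldr max 0
      with hddef
    have hpd : PinnedDist G l d := by
      constructor
      · intro u; simp [hddef]
      · intro u w huw q hq
        have := (hT.existsUnique_path u w).unique hq
          (hT.existsUnique_path u w).exists.choose_spec
        simp only [hddef, dif_neg huw, this]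
    obtain ⟨ε, hε, hεle⟩ := H l hnd d hpd v
    obtain ⟨n, hn⟩ := exists_nat_gt (1 / ε)
    have hne : (f n : V) ≠ v := hvne n
    have hadj : G.Adj v (f n : V) := (f n).2
    have hcalc : d v (f n : V) = 1 / (n + 1) := by
      have hq : (SimpleGraph.Walk.cons hadj SimpleGraph.Walk.nil).IsPath := by
        simp [SimpleGraph.Walk.isPath_iff_eq_nil, Ne.symm hne]
      rw [hpd.2 v (f n : V) (Ne.symm hne) _ hq]
      simp [SimpleGraph.Walk.support_cons, hlv, hlfn n]
      positivity
    have hle := hεle (f n : V) hne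
    rw [hcalc] at hle
    have : 1 / ε < n + 1 := lt_trans hn (by norm_num)
    have h2 : 1 / ((n : ℝ) + 1) < ε := by
      rw [div_lt_iff₀ (by positivity), mul_comm]
      exact (div_lt_iff₀ hε).mp this
    linarith
end

section
/- Let T = T(l) be a labeled tree with non-degenerate labeling. If the ultrametric space (V(T), d_l) is totally bounded, then V(T) is at most countable. -/
open SimpleGraph Filter

section Aux

variable {V : Type} {G : SimpleGraph V} {l : V → ℝ} {d : V → V → ℝ}

lemma le_fold {L : List ℝ} {a : ℝ} (h : a ∈ L) : a ≤ L.foldr max 0 := by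
  induction L with
  | nil => simp at h
  | cons b t ih =>
    rcases List.mem_cons.mp h with rfl | h
    · exact le_max_left _ _
    · exact (ih h).trans (le_max_right _ _)

lemma fold_nonneg (L : List ℝ) : 0 ≤ L.foldr max 0 := by
  induction L with
  | nil => simp
  | cons b t ih => exact ih.trans (le_max_right _ _)

lemma fold_le {L : List ℝ} {b : ℝ} (h0 : 0 ≤ b) (h : ∀ a ∈ L, a ≤ b) :
    L.foldr max 0 ≤ b := by
  induction L with
  | nil => simpa
  | cons c t ih =>
    simp only [List.foldr_cons]
    exact max_le (h c List.mem_cons_self) (ih fun a ha => h a (List.mem_cons_of_mem _ ha))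

lemma exists_d (hc : G.Preconnected) (hd : PinnedDist G l d) {u v : V} (hne : u ≠ v) :
    ∃ p : G.Walk u v, p.IsPath ∧ d u v = (p.support.map l).foldr max 0 := by
  classical
  obtain ⟨w⟩ := hc u v
  exact ⟨w.bypass, w.bypass_isPath, hd.2 u v hne w.bypass w.bypass_isPath⟩

lemma d_nonneg (hc : G.Preconnected) (hd : PinnedDist G l d) (u v : V) : 0 ≤ d u v := by
  by_cases h : u = v
  · subst h; rw [hd.1]
  · obtain ⟨p, hp, e⟩ := exists_d hc hd h
    rw [e]; exact fold_nonneg _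

lemma d_le_walk (hd : PinnedDist G l d) {u v : V} (hne : u ≠ v) (w : G.Walk u v) :
    d u v ≤ (w.support.map l).foldr max 0 := by
  classical
  rw [hd.2 u v hne w.bypass w.bypass_isPath]
  refine fold_le (fold_nonneg _) fun a ha => ?_
  obtain ⟨x, hx, rfl⟩ := List.mem_map.mp ha
  exact le_fold (List.mem_map_of_mem (f := l) (w.support_bypass_subset hx))

lemma lv_le_d (hc : G.Preconnected) (hd : PinnedDist G l d) {u v : V} (hne : u ≠ v) :
    l v ≤ d u v := by
  obtain ⟨p, hp, e⟩ := exists_d hc hd hne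
  rw [e]
  exact le_fold (List.mem_map_of_mem (f := l) p.end_mem_support)

lemma d_symm (hc : G.Preconnected) (hd : PinnedDist G l d) (u v : V) : d u v = d v u := by
  by_cases h : u = v
  · subst h; rfl
  · obtain ⟨p, hp, e⟩ := exists_d hc hd h
    have e2 := hd.2 v u (Ne.symm h) p.reverse hp.reverse
    rw [e, e2]
    have hmem : ∀ x : ℝ, x ∈ p.reverse.support.map l ↔ x ∈ p.support.map l := by
      intro x
      simp [SimpleGraph.Walk.support_reverse]
    refine le_antisymm ?_ ?_
    · exact fold_le (fold_nonneg _) fun a ha => le_fold ((hmem a).mpr ha)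
    · exact fold_le (fold_nonneg _) fun a ha => le_fold ((hmem a).mp ha)

lemma d_ultra (hc : G.Preconnected) (hd : PinnedDist G l d) (u v w : V) :
    d u w ≤ max (d u v) (d v w) := by
  by_cases huw : u = w
  · subst huw; rw [hd.1]
    exact le_max_of_le_left (d_nonneg hc hd u v)
  by_cases huv : u = v
  · subst huv; exact le_max_right _ _
  by_cases hvw : v = w
  · subst hvw; exact le_max_left _ _
  obtain ⟨p, hp, ep⟩ := exists_d hc hd huv
  obtain ⟨q, hq, eq'⟩ := exists_d hc hd hvw
  refine (d_le_walk hd huw (p.append q)).trans ?_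
  refine fold_le (le_max_of_le_left (d_nonneg hc hd u v)) fun a ha => ?_
  obtain ⟨x, hx, rfl⟩ := List.mem_map.mp ha
  rw [SimpleGraph.Walk.support_append] at hx
  rcases List.mem_append.mp hx with h | h
  · exact le_max_of_le_left (by rw [ep]; exact le_fold (List.mem_map_of_mem (f := l) h))
  · exact le_max_of_le_right
      (by rw [eq']; exact le_fold (List.mem_map_of_mem (f := l) (List.mem_of_mem_tail h)))

lemma sep_finite (hc : G.Preconnected) (hd : PinnedDist G l d)
    (htb : TotallyBoundedWith d) {r : ℝ} (hr : 0 < r) {T : Set V}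
    (hsep : ∀ z ∈ T, ∀ z' ∈ T, z ≠ z' → r ≤ d z z') : T.Finite := by
  obtain ⟨S, hS⟩ := htb r hr
  choose c hcS hcd using hS
  refine Set.Finite.of_finite_image (f := c) ?_ ?_
  · refine S.finite_toSet.subset ?_
    rintro _ ⟨z, hz, rfl⟩; exact hcS z
  · intro z1 h1 z2 h2 hcc
    by_contra hne
    have h12 : d z1 z2 < r := by
      calc d z1 z2 ≤ max (d z1 (c z1)) (d (c z1) z2) := d_ultra hc hd _ _ _
        _ < r := by
          refine max_lt ?_ ?_
          · rw [d_symm hc hd]; exact hcd z1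
          · rw [hcc]; exact hcd z2
    exact absurd h12 (not_lt.mpr (hsep z1 h1 z2 h2 hne))

lemma la_le_d (hd : PinnedDist G l d) {a z1 z2 : V} (h1 : G.Adj a z1) (h2 : G.Adj a z2)
    (hne : z1 ≠ z2) : l a ≤ d z1 z2 := by
  set p : G.Walk z1 z2 := SimpleGraph.Walk.cons h1.symm (SimpleGraph.Walk.cons h2 SimpleGraph.Walk.nil) with hp
  have hpath : p.IsPath := by
    simp [hp, SimpleGraph.Walk.isPath_def, h1.ne', h2.ne, hne]
  rw [hd.2 z1 z2 hne p hpath]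
  refine le_fold ?_
  simp [hp]

end Aux

theorem stmt16 {V : Type} {G : SimpleGraph V} (hT : G.IsTree)
    (l : V → ℝ) (hl : NondegLabeling G l) (d : V → V → ℝ) (hd : PinnedDist G l d)
    (htb : TotallyBoundedWith d) : Countable V := by
  classical
  have hc : G.Preconnected := hT.isConnected.preconnected
  have hfin : ∀ ε : ℝ, 0 < ε → {v : V | ε ≤ l v}.Finite := by
    intro ε hε
    refine sep_finite hc hd htb hε ?_
    intro z hz z' hz' hne
    exact le_trans hz' (lv_le_d hc hd hne)
  have hA : {v : V | 0 < l v}.Countable := by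
    have hsub : {v : V | 0 < l v} ⊆ ⋃ n : ℕ, {v : V | 1 / ((n : ℝ) + 1) ≤ l v} := by
      intro v hv
      obtain ⟨n, hn⟩ := exists_nat_one_div_lt (show (0:ℝ) < l v from hv)
      exact Set.mem_iUnion.mpr ⟨n, le_of_lt hn⟩
    exact (Set.countable_iUnion fun n => (hfin _ (by positivity)).countable).mono hsub
  by_cases hsing : ∀ u v : V, u = v
  · have : Subsingleton V := ⟨hsing⟩
    exact Subsingleton.to_countable
  · push_neg at hsing
    obtain ⟨u0, v0, huv0⟩ := hsing
    have hnb : ∀ v : V, ∃ a, G.Adj v a := by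
      intro v
      have key : ∀ t : V, v ≠ t → ∃ a, G.Adj v a := by
        intro t ht
        obtain ⟨p⟩ := hc v t
        cases p with
        | nil => exact absurd rfl ht
        | cons h q => exact ⟨_, h⟩
      rcases ne_or_eq v u0 with h | rfl
      · exact key u0 h
      · exact key v0 huv0
    have hZ : {v : V | l v = 0}.Countable := by
      have hsub : {v : V | l v = 0} ⊆
          ⋃ a ∈ {v : V | 0 < l v}, {z : V | G.Adj a z ∧ l z = 0} := by
        intro z hz
        obtain ⟨a, ha⟩ := hnb z
        have hla : 0 < l a := by
          have h := hl.2 z a ha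
          rw [Set.mem_setOf_eq] at hz
          rw [hz] at h
          simpa [max_eq_right (hl.1 a)] using h
        exact Set.mem_iUnion₂.mpr ⟨a, hla, ha.symm, hz⟩
      refine (Set.Countable.biUnion hA fun a ha => ?_).mono hsub
      refine Set.Finite.countable ?_
      refine sep_finite hc hd htb ha ?_
      intro z1 hz1 z2 hz2 hne
      exact la_le_d hd hz1.1 hz2.1 hne
    have huniv : (Set.univ : Set V).Countable := by
      refine (hA.union hZ).mono ?_
      intro v _
      rcases (hl.1 v).lt_or_eq with h | h
      · exact Or.inl h
      · exact Or.inr h.symm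
    exact Set.countable_univ_iff.mp huniv
end
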